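/- arXiv:2304.05000 — 2 statements merged into one kernel-verified Lean document; each statement's English description precedes it below -/
import Mathlib

section
/- Let R be a left-symmetric conformal algebra, Q a ℂ[∂]-module, and Ω(R,Q) = (φ, ψ, l, r, g_λ(·,·), ∘_λ) an extending datum of R by Q. Then R♮Q with the λ-product (a+x)_λ(b+y) = (a_λ b + φ(x)_λ b + ψ(y)_{−λ−∂}a + g_λ(x,y)) + (x∘_λ y + l(a)_λ y + r(b)_{−λ−∂}x) is a left-symmetric conformal algebra if and only if the following ten compatibility conditions hold for all a, b ∈ R and x, y, z ∈ Q: (LC1) (φ(x)_λ a − ψ(x)_λ a)_{λ+μ} b + φ(r(a)_μ x − l(a)_μ x)_{λ+μ} b = φ(x)_λ(a_μ b) − a_μ(φ(x)_λ b) − ψ(r(b)_{−λ−∂}x)_{−μ−∂} a; (LC2) r(b)_{−λ−μ−∂}(r(a)_μ x − l(a)_μ x) = r(a_μ b)_{−λ−∂} x − l(a)_μ(r(b)_{−λ−∂} x); (LC3) ψ(x)_{−λ−μ−∂}(a_λ b − b_μ a) = a_λ(ψ(x)_{−μ−∂} b) − b_μ(ψ(x)_{−λ−∂} a) + ψ(l(b)_μ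 x)_{−λ−∂} a − ψ(l(a)_λ x)_{−μ−∂} b; (LC4) l(a_λ b)_{λ+μ} x − l(b_μ a)_{λ+μ} x = l(a)_λ(l(b)_μ x) − l(b)_μ(l(a)_λ x); (LC5) ψ(y)_{−λ−μ−∂}(ψ(x)_μ a − φ(x)_μ a) + g_{λ+μ}(l(a)_λ x, y) − a_λ(g_μ(x,y)) − ψ(x∘_μ y)_{−λ−∂} a = g_{λ+μ}(r(a)_{−μ−∂} x, y) − φ(x)_μ(ψ(y)_{−λ−∂} a) − g_μ(x, l(a)_λ y); (LC6) (l(a)_λ x)∘_{λ+μ} y + l(ψ(x)_{−λ−∂} a)_{λ+μ} y − l(a)_λ(x∘_μ y) = l(φ(x)_μ a)_{λ+μ} y + (r(a)_{−μ−∂} x)∘_{λ+μ} y − r(ψ(y)_{−λ−∂} a)_{−μ−∂} x − x∘_μ(l(a)_λ y); (LC7) (g_λ(x,y) − g_μ(y,x))_{λ+μ} a + φ(x∘_λ y − y∘_μ x)_{λ+μ} a = φ(x)_λ(φ(y)_μ a) − φ(y)_μ(φ(x)_λ a) + g_λ(x, r(a)_{−μ−∂} y) − g_μ(y, r(a)_{−λ−∂}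 x); (LC8) r(a)_{−λ−μ−∂}(x∘_λ y − y∘_μ x) = r(φ(y)_μ a)_{−λ−∂} x − r(φ(x)_λ a)_{−μ−∂} y + x∘_λ(r(a)_{−μ−∂} y) − y∘_μ(r(a)_{−λ−∂} x); (LC9) ψ(z)_{−λ−μ−∂} g_λ(x,y) + g_{λ+μ}(x∘_λ y, z) − φ(x)_λ g_μ(y,z) − g_λ(x, y∘_μ z) = ψ(z)_{−λ−μ−∂} g_μ(y,x) + g_{λ+μ}(y∘_μ x, z) − φ(y)_μ g_λ(x,z) − g_μ(y, x∘_λ z); (LC10) l(g_λ(x,y))_{λ+μ} z + (x∘_λ y)∘_{λ+μ} z − r(g_μ(y,z))_{−λ−∂} x − x∘_λ(y∘_μ z) = l(g_μ(y,x))_{λ+μ} z + (y∘_μ x)∘_{λ+μ} z − r(g_λ(x,z))_{−μ−∂} y − y∘_μ(x∘_λ z). -/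
open Finsupp Polynomial

noncomputable section

/-- One-variable conformal polynomials in λ with coefficients in `W`:
the coefficient of `λ^n` sits at index `n`. -/
abbrev OP (W : Type*) [Zero W] := ℕ →₀ W

/-- Two-variable conformal polynomials in λ, μ with coefficients in `W`. -/
abbrev TP (W : Type*) [Zero W] := (ℕ × ℕ) →₀ W

section Defs

variable {U V W L : Type*}
variable [AddCommGroup U] [Module ℂ U] [AddCommGroup V] [Module ℂ V]
variable [AddCommGroup W] [Module ℂ W] [AddCommGroup L] [Module ℂ L]

/-- Multiplication by the variable λ on one-variable polynomials. -/
def lsh : OP W →ₗ[ℂ] OP W := Finsupp.lmapDomain W ℂ (· + 1)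

/-- Multiplication by λ on two-variable polynomials. -/
def LX : TP W →ₗ[ℂ] TP W := Finsupp.lmapDomain W ℂ (fun p => (p.1 + 1, p.2))

/-- Multiplication by μ on two-variable polynomials. -/
def LY : TP W →ₗ[ℂ] TP W := Finsupp.lmapDomain W ℂ (fun p => (p.1, p.2 + 1))

/-- Coefficientwise action of ∂ on one-variable polynomials. -/
def pD (dW : W →ₗ[ℂ] W) : OP W →ₗ[ℂ] OP W := Finsupp.mapRange.linearMap dW

/-- Coefficientwise action of ∂ on two-variable polynomials. -/
def PD (dW : W →ₗ[ℂ] W) : TP W →ₗ[ℂ] TP W := Finsupp.mapRange.linearMap dW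

/-- The operator −λ−∂ on one-variable polynomials. -/
def nD (dW : W →ₗ[ℂ] W) : OP W →ₗ[ℂ] OP W := -lsh - pD dW

/-- The operator −λ−∂ on two-variable polynomials. -/
def nX (dW : W →ₗ[ℂ] W) : TP W →ₗ[ℂ] TP W := -LX - PD dW

/-- The operator −μ−∂ on two-variable polynomials. -/
def nY (dW : W →ₗ[ℂ] W) : TP W →ₗ[ℂ] TP W := -LY - PD dW

/-- The operator −λ−μ−∂ on two-variable polynomials. -/
def nXY (dW : W →ₗ[ℂ] W) : TP W →ₗ[ℂ] TP W := -LX - LY - PD dW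

/-- Substitution of a (commuting) operator `A` for the variable of a one-variable
polynomial, with values in two-variable polynomials. -/
def evA (A : TP W →ₗ[ℂ] TP W) : OP W →ₗ[ℂ] TP W :=
  Finsupp.lsum ℂ (fun k => (A ^ k) ∘ₗ Finsupp.lsingle ((0, 0) : ℕ × ℕ))

/-- Substitution of an operator `A` for the variable of a one-variable polynomial. -/
def evA1 (A : OP W →ₗ[ℂ] OP W) : OP W →ₗ[ℂ] OP W :=
  Finsupp.lsum ℂ (fun k => (A ^ k) ∘ₗ Finsupp.lsingle (0 : ℕ))

/-- `u_A v`: the pairing `m` evaluated with the variable replaced by the operator `A`. -/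
def ev2 (m : U →ₗ[ℂ] V →ₗ[ℂ] OP W) (A : TP W →ₗ[ℂ] TP W) (u : U) (v : V) : TP W :=
  evA A (m u v)

/-- Extension of the pairing `m`, in its first argument, to two-variable polynomials. -/
def exL (m : U →ₗ[ℂ] V →ₗ[ℂ] OP W) (A : TP W →ₗ[ℂ] TP W) (p : TP U) (v : V) : TP W :=
  Finsupp.sum p fun ij u => (LX ^ ij.1) ((LY ^ ij.2) (evA A (m u v)))

/-- Extension of the pairing `m`, in its second argument, to two-variable polynomials. -/
def exR (m : U →ₗ[ℂ] V →ₗ[ℂ] OP W) (A : TP W →ₗ[ℂ] TP W) (u : U) (p : TP V) : TP W :=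
  Finsupp.sum p fun ij v => (LX ^ ij.1) ((LY ^ ij.2) (evA A (m u v)))

/-- Extension of a unary conformal-linear map to two-variable polynomials. -/
def exU (D : U →ₗ[ℂ] OP W) (A : TP W →ₗ[ℂ] TP W) (p : TP U) : TP W :=
  Finsupp.sum p fun ij u => (LX ^ ij.1) ((LY ^ ij.2) (evA A (D u)))

/-- Coefficientwise application of a linear map to a one-variable polynomial. -/
def pMap (f : U →ₗ[ℂ] W) : OP U →ₗ[ℂ] OP W := Finsupp.mapRange.linearMap f

/-- A conformal bilinear map: `f(∂u, v) = −λ f(u,v)` and `f(u, ∂v) = (λ+∂) f(u,v)`. -/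
structure ConfBilin (dU : U →ₗ[ℂ] U) (dV : V →ₗ[ℂ] V) (dW : W →ₗ[ℂ] W)
    (m : U →ₗ[ℂ] V →ₗ[ℂ] OP W) : Prop where
  dleft : ∀ u v, m (dU u) v = -lsh (m u v)
  dright : ∀ u v, m u (dV v) = lsh (m u v) + pD dW (m u v)

/-- A left-symmetric conformal algebra structure on the ℂ[∂]-module `(L, dL)`. -/
structure IsLSCA (dL : L →ₗ[ℂ] L) (m : L →ₗ[ℂ] L →ₗ[ℂ] OP L) : Prop where
  conf : ConfBilin dL dL dL m
  lsym : ∀ a b c : L,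
    exL m (LX + LY) (ev2 m LX a b) c - exR m LX a (ev2 m LY b c)
      = exL m (LX + LY) (ev2 m LY b a) c - exR m LY b (ev2 m LX a c)

/-- The commutator λ-bracket `[u_λ v] = u_λ v − v_{−λ−∂} u`. -/
def commut (dL : L →ₗ[ℂ] L) (m : L →ₗ[ℂ] L →ₗ[ℂ] OP L) : L →ₗ[ℂ] L →ₗ[ℂ] OP L :=
  m - (m.compr₂ (evA1 (nD dL))).flip

/-- A Lie conformal algebra structure on the ℂ[∂]-module `(L, dL)`. -/
structure IsLieCA (dL : L →ₗ[ℂ] L) (br : L →ₗ[ℂ] L →ₗ[ℂ] OP L) : Prop where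
  dleft : ∀ u v, br (dL u) v = -lsh (br u v)
  dright : ∀ u v, br u (dL v) = lsh (br u v) + pD dL (br u v)
  skew : ∀ u v, br u v = -evA1 (nD dL) (br v u)
  jacobi : ∀ a b c : L,
    exR br LX a (ev2 br LY b c)
      = exL br (LX + LY) (ev2 br LX a b) c + exR br LY b (ev2 br LX a c)

end Defs

section Ext

variable {R Q : Type*} [AddCommGroup R] [Module ℂ R] [AddCommGroup Q] [Module ℂ Q]

/-- An extending datum of a left-symmetric conformal algebra `R` by a ℂ[∂]-module `Q`. -/
structure ExtDatum (dR : R →ₗ[ℂ] R) (dQ : Q →ₗ[ℂ] Q) where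
  phi : Q →ₗ[ℂ] R →ₗ[ℂ] OP R
  psi : Q →ₗ[ℂ] R →ₗ[ℂ] OP R
  l : R →ₗ[ℂ] Q →ₗ[ℂ] OP Q
  r : R →ₗ[ℂ] Q →ₗ[ℂ] OP Q
  g : Q →ₗ[ℂ] Q →ₗ[ℂ] OP R
  o : Q →ₗ[ℂ] Q →ₗ[ℂ] OP Q
  hphi : ConfBilin dQ dR dR phi
  hpsi : ConfBilin dQ dR dR psi
  hl : ConfBilin dR dQ dQ l
  hr : ConfBilin dR dQ dQ r
  hg : ConfBilin dQ dQ dR g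
  ho : ConfBilin dQ dQ dQ o

/-- Embedding of `R`-valued polynomials into `(R ⊕ Q)`-valued polynomials. -/
def inlP (R Q : Type*) [AddCommGroup R] [Module ℂ R] [AddCommGroup Q] [Module ℂ Q] :
    OP R →ₗ[ℂ] OP (R × Q) := Finsupp.mapRange.linearMap (LinearMap.inl ℂ R Q)

/-- Embedding of `Q`-valued polynomials into `(R ⊕ Q)`-valued polynomials. -/
def inrP (R Q : Type*) [AddCommGroup R] [Module ℂ R] [AddCommGroup Q] [Module ℂ Q] :
    OP Q →ₗ[ℂ] OP (R × Q) := Finsupp.mapRange.linearMap (LinearMap.inr ℂ R Q)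

/-- The λ-product of the unified product `R ♮ Q`:
`(a+x) _λ (b+y) = (a_λ b + φ(x)_λ b + ψ(y)_{−λ−∂} a + g_λ(x,y)) + (x∘_λ y + l(a)_λ y + r(b)_{−λ−∂} x)`. -/
def uprod (dR : R →ₗ[ℂ] R) (dQ : Q →ₗ[ℂ] Q) (Ω : ExtDatum dR dQ)
    (m : R →ₗ[ℂ] R →ₗ[ℂ] OP R) :
    (R × Q) →ₗ[ℂ] (R × Q) →ₗ[ℂ] OP (R × Q) :=
  ((m.compl₁₂ (LinearMap.fst ℂ R Q) (LinearMap.fst ℂ R Q)).compr₂ (inlP R Q))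
    + ((Ω.phi.compl₁₂ (LinearMap.snd ℂ R Q) (LinearMap.fst ℂ R Q)).compr₂ (inlP R Q))
    + (((Ω.psi.compl₁₂ (LinearMap.snd ℂ R Q) (LinearMap.fst ℂ R Q)).compr₂
        (inlP R Q ∘ₗ evA1 (nD dR))).flip)
    + ((Ω.g.compl₁₂ (LinearMap.snd ℂ R Q) (LinearMap.snd ℂ R Q)).compr₂ (inlP R Q))
    + ((Ω.o.compl₁₂ (LinearMap.snd ℂ R Q) (LinearMap.snd ℂ R Q)).compr₂ (inrP R Q))
    + ((Ω.l.compl₁₂ (LinearMap.fst ℂ R Q) (LinearMap.snd ℂ R Q)).compr₂ (inrP R Q))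
    + (((Ω.r.compl₁₂ (LinearMap.fst ℂ R Q) (LinearMap.snd ℂ R Q)).compr₂
        (inrP R Q ∘ₗ evA1 (nD dQ))).flip)

lemma uprod_apply (dR : R →ₗ[ℂ] R) (dQ : Q →ₗ[ℂ] Q) (Ω : ExtDatum dR dQ)
    (m : R →ₗ[ℂ] R →ₗ[ℂ] OP R) (e₁ e₂ : R × Q) :
    uprod dR dQ Ω m e₁ e₂ =
      inlP R Q (m e₁.1 e₂.1 + Ω.phi e₁.2 e₂.1 + evA1 (nD dR) (Ω.psi e₂.2 e₁.1) + Ω.g e₁.2 e₂.2)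
      + inrP R Q (Ω.o e₁.2 e₂.2 + Ω.l e₁.1 e₂.2 + evA1 (nD dQ) (Ω.r e₂.1 e₁.2)) := by
  simp [uprod, LinearMap.add_apply, LinearMap.compr₂_apply, LinearMap.compl₁₂_apply,
    LinearMap.flip_apply, map_add, LinearMap.comp_apply]
  abel

lemma uprod_res (dR : R →ₗ[ℂ] R) (dQ : Q →ₗ[ℂ] Q) (Ω : ExtDatum dR dQ)
    (m : R →ₗ[ℂ] R →ₗ[ℂ] OP R) (a b : R) :
    uprod dR dQ Ω m (a, (0 : Q)) (b, 0) = inlP R Q (m a b) := by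
  rw [uprod_apply]
  simp

/-- Isomorphism property of left-symmetric conformal algebra structures, via
a ℂ[∂]-module automorphism `T` of the underlying module `E`. -/
structure IsIsoLSCA {E : Type*} [AddCommGroup E] [Module ℂ E] (dE : E →ₗ[ℂ] E)
    (m₁ m₂ : E →ₗ[ℂ] E →ₗ[ℂ] OP E) (T : E ≃ₗ[ℂ] E) : Prop where
  dcomm : ∀ e, T (dE e) = dE (T e)
  mult : ∀ u v, m₂ (T u) (T v) = pMap (T : E →ₗ[ℂ] E) (m₁ u v)

/-- `T` stabilizes `R`, i.e. `T ∘ i = i` for the inclusion `i : R → R ⊕ Q`. -/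
def Stab (T : (R × Q) ≃ₗ[ℂ] (R × Q)) : Prop := ∀ a : R, T (a, 0) = (a, 0)

/-- `T` co-stabilizes `Q`, i.e. `π ∘ T = π` for the projection `π : R ⊕ Q → Q`. -/
def Costab (T : (R × Q) ≃ₗ[ℂ] (R × Q)) : Prop := ∀ e, (T e).2 = e.2

end Ext

/-!
The unified product is always conformal bilinear, so it is left-symmetric exactly when its
left-symmetry defect, a trilinear map, vanishes. By additivity it suffices to test triples whose
entries each lie in `R` or in `Q`. The triple type `(R, R, R)` is settled by the left-symmetry of
`R`, and since the defect is antisymmetric in its first two arguments up to the exchange `λ ↔ μ`,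
the types `(R, Q, R)` and `(Q, R, Q)` reduce to `(Q, R, R)` and `(R, Q, Q)`. Each of the five
remaining types has an `R`-component and a `Q`-component, and these ten equations are
(LC1)–(LC10).

The λ-products with a polynomial argument (`exL`, `exR`) are the `ℂ[λ, μ]`-linear extensions
`polyExt` of their values on constants, and all the bookkeeping goes through `polyExt`.
-/

theorem semiconj_pow {K M N : Type*} [Semiring K] [AddCommMonoid M] [Module K M]
    [AddCommMonoid N] [Module K N] {F : M →ₗ[K] N} {B : Module.End K M} {C : Module.End K N}
    (h : Function.Semiconj F B C) (n : ℕ) : Function.Semiconj F ⇑(B ^ n) ⇑(C ^ n) := by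
  simpa only [Module.End.coe_pow] using h.iterate_right n

section Operators

variable {W W' : Type*} [AddCommGroup W] [Module ℂ W] [AddCommGroup W'] [Module ℂ W']

theorem mapRange_lmapDomain {α β : Type*} (f : W →ₗ[ℂ] W') (σ : α → β) (p : α →₀ W) :
    Finsupp.mapRange.linearMap f (Finsupp.lmapDomain W ℂ σ p)
      = Finsupp.lmapDomain W' ℂ σ (Finsupp.mapRange.linearMap f p) :=
  (Finsupp.mapDomain_mapRange σ p f (map_zero f) (map_add f)).symm

theorem semiconj_mapRange_LX (f : W →ₗ[ℂ] W') :
    Function.Semiconj (Finsupp.mapRange.linearMap f : TP W →ₗ[ℂ] TP W') LX LX :=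
  mapRange_lmapDomain f _

theorem semiconj_mapRange_LY (f : W →ₗ[ℂ] W') :
    Function.Semiconj (Finsupp.mapRange.linearMap f : TP W →ₗ[ℂ] TP W') LY LY :=
  mapRange_lmapDomain f _

theorem semiconj_mapRange_lsh (f : W →ₗ[ℂ] W') :
    Function.Semiconj (Finsupp.mapRange.linearMap f : OP W →ₗ[ℂ] OP W') lsh lsh :=
  mapRange_lmapDomain f _

theorem semiconj_mapRange_LX_add_LY (f : W →ₗ[ℂ] W') :
    Function.Semiconj (Finsupp.mapRange.linearMap f : TP W →ₗ[ℂ] TP W')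
      ⇑(LX + LY : TP W →ₗ[ℂ] TP W) ⇑(LX + LY : TP W' →ₗ[ℂ] TP W') := fun q => by
  simp only [LinearMap.add_apply, map_add, semiconj_mapRange_LX f q, semiconj_mapRange_LY f q]

theorem commute_LX_LY : Function.Commute (LX : TP W →ₗ[ℂ] TP W) LY := by
  intro q
  simp only [LX, LY, Finsupp.lmapDomain_apply, ← Finsupp.mapDomain_comp]
  rfl

theorem commute_PD_LX (d : W →ₗ[ℂ] W) : Function.Commute (PD d) LX := semiconj_mapRange_LX d

theorem commute_PD_LY (d : W →ₗ[ℂ] W) : Function.Commute (PD d) LY := semiconj_mapRange_LY d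

theorem commute_PD_LX_add_LY (d : W →ₗ[ℂ] W) :
    Function.Commute (PD d) ⇑(LX + LY : TP W →ₗ[ℂ] TP W) := fun q => by
  simp only [LinearMap.add_apply, map_add, commute_PD_LX d q, commute_PD_LY d q]

theorem commute_pD_lsh (d : W →ₗ[ℂ] W) : Function.Commute (pD d) lsh := semiconj_mapRange_lsh d

theorem evA_single (A : TP W →ₗ[ℂ] TP W) (k : ℕ) (w : W) :
    evA A (Finsupp.single k w) = (A ^ k) (Finsupp.single (0, 0) w) := by
  simp [evA]

theorem evA_lsh (A : TP W →ₗ[ℂ] TP W) (p : OP W) : evA A (lsh p) = A (evA A p) := by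
  induction p using Finsupp.induction_linear with
  | zero => simp
  | add p q hp hq => simp only [map_add, hp, hq]
  | single k w => simp [lsh, evA_single, pow_succ']

theorem evA_mapRange {A : TP W →ₗ[ℂ] TP W} {B : TP W' →ₗ[ℂ] TP W'} (f : W →ₗ[ℂ] W')
    (h : Function.Semiconj (Finsupp.mapRange.linearMap f) A B) (p : OP W) :
    evA B (Finsupp.mapRange.linearMap f p) = Finsupp.mapRange.linearMap f (evA A p) := by
  induction p using Finsupp.induction_linear with
  | zero => simp
  | add p q hp hq => simp only [map_add, hp, hq]
  | single k w => simp [evA_single, (semiconj_pow h k).eq]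

theorem evA_evA1 {A C : TP W →ₗ[ℂ] TP W} {B : OP W →ₗ[ℂ] OP W}
    (h : Function.Semiconj (evA A) B C) (q : OP W) : evA A (evA1 B q) = evA C q := by
  induction q using Finsupp.induction_linear with
  | zero => simp
  | add p q hp hq => simp only [map_add, hp, hq]
  | single k w => simp [evA1, evA_single, (semiconj_pow h k).eq]

theorem evA_evA1_nD {A : TP W →ₗ[ℂ] TP W} (d : W →ₗ[ℂ] W) (h : Function.Commute (PD d) A)
    (q : OP W) : evA A (evA1 (nD d) q) = evA (-A - PD d) q := by
  refine evA_evA1 (fun p => ?_) q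
  simp only [nD, LinearMap.sub_apply, LinearMap.neg_apply, map_sub, map_neg, evA_lsh]
  rw [pD, evA_mapRange d h]
  rfl

theorem pD_single (d : W →ₗ[ℂ] W) (k : ℕ) (w : W) :
    pD d (Finsupp.single k w) = Finsupp.single k (d w) := by
  simp [pD]

theorem evA1_single (A : OP W →ₗ[ℂ] OP W) (k : ℕ) (w : W) :
    evA1 A (Finsupp.single k w) = (A ^ k) (Finsupp.single 0 w) := by
  simp [evA1]

theorem evA1_lsh (A : OP W →ₗ[ℂ] OP W) (p : OP W) : evA1 A (lsh p) = A (evA1 A p) := by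
  induction p using Finsupp.induction_linear with
  | zero => simp
  | add p q hp hq => simp only [map_add, hp, hq]
  | single k w => simp [lsh, evA1_single, pow_succ']

theorem evA1_pD {A : OP W →ₗ[ℂ] OP W} (d : W →ₗ[ℂ] W) (h : Function.Commute (pD d) A)
    (p : OP W) : evA1 A (pD d p) = pD d (evA1 A p) := by
  induction p using Finsupp.induction_linear with
  | zero => simp
  | add p q hp hq => simp only [map_add, hp, hq]
  | single k w => rw [pD_single, evA1_single, evA1_single, ← pD_single, (semiconj_pow h k).eq]

theorem evA1_nD_lsh_add_pD (d : W →ₗ[ℂ] W) (p : OP W) :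
    evA1 (nD d) (lsh p + pD d p) = -lsh (evA1 (nD d) p) := by
  have h : Function.Commute (pD d) (nD d) := fun q => by
    simp only [nD, LinearMap.sub_apply, LinearMap.neg_apply, map_sub, map_neg,
      commute_pD_lsh d q]
  rw [map_add, evA1_lsh, evA1_pD d h, nD]
  simp only [LinearMap.sub_apply, LinearMap.neg_apply]
  abel

theorem evA1_nD_neg_lsh (d : W →ₗ[ℂ] W) (p : OP W) :
    evA1 (nD d) (-lsh p) = lsh (evA1 (nD d) p) + pD d (evA1 (nD d) p) := by
  rw [map_neg, evA1_lsh, nD]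
  simp only [LinearMap.sub_apply, LinearMap.neg_apply]
  abel

end Operators

section PolyExt

variable {U V W W' : Type*} [AddCommGroup U] [Module ℂ U] [AddCommGroup V] [Module ℂ V]
  [AddCommGroup W] [Module ℂ W] [AddCommGroup W'] [Module ℂ W']

/-- The `ℂ[λ, μ]`-linear extension of `F` from constant polynomials to `TP U`. -/
def polyExt (F : U →ₗ[ℂ] TP W) : TP U →ₗ[ℂ] TP W :=
  Finsupp.lsum ℂ fun ij => (LX ^ ij.1) ∘ₗ (LY ^ ij.2) ∘ₗ F

theorem LX_single (ij : ℕ × ℕ) (w : W) :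
    LX (Finsupp.single ij w) = Finsupp.single (ij.1 + 1, ij.2) w := by
  simp [LX]

theorem LY_single (ij : ℕ × ℕ) (w : W) :
    LY (Finsupp.single ij w) = Finsupp.single (ij.1, ij.2 + 1) w := by
  simp [LY]

theorem commute_pow_LX_pow_LY (i j : ℕ) (q : TP W) :
    (LX ^ i) ((LY ^ j) q) = (LY ^ j) ((LX ^ i) q) :=
  semiconj_pow (Function.Commute.symm (semiconj_pow commute_LX_LY.symm i)) j q

theorem polyExt_single (F : U →ₗ[ℂ] TP W) (ij : ℕ × ℕ) (u : U) :
    polyExt F (Finsupp.single ij u) = (LX ^ ij.1) ((LY ^ ij.2) (F u)) := by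
  simp [polyExt]

theorem exL_eq_polyExt (n : U →ₗ[ℂ] V →ₗ[ℂ] OP W) (A : TP W →ₗ[ℂ] TP W) (P : TP U) (v : V) :
    exL n A P v = polyExt (evA A ∘ₗ n.flip v) P := by
  rw [polyExt, Finsupp.lsum_apply]; rfl

theorem exR_eq_polyExt (n : U →ₗ[ℂ] V →ₗ[ℂ] OP W) (A : TP W →ₗ[ℂ] TP W) (u : U) (P : TP V) :
    exR n A u P = polyExt (evA A ∘ₗ n u) P := by
  rw [polyExt, Finsupp.lsum_apply]; rfl

theorem polyExt_add (F G : U →ₗ[ℂ] TP W) (P : TP U) :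
    polyExt (F + G) P = polyExt F P + polyExt G P := by
  induction P using Finsupp.induction_linear with
  | zero => simp
  | add P P' hP hP' => simp only [map_add, hP, hP']; abel
  | single ij u => simp [polyExt_single]

theorem polyExt_LX (F : U →ₗ[ℂ] TP W) (P : TP U) : polyExt F (LX P) = LX (polyExt F P) := by
  induction P using Finsupp.induction_linear with
  | zero => simp
  | add P P' hP hP' => simp only [map_add, hP, hP']
  | single ij u =>
    rw [LX_single, polyExt_single, polyExt_single, pow_succ', Module.End.mul_apply]

theorem polyExt_LY (F : U →ₗ[ℂ] TP W) (P : TP U) : polyExt F (LY P) = LY (polyExt F P) := by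
  induction P using Finsupp.induction_linear with
  | zero => simp
  | add P P' hP hP' => simp only [map_add, hP, hP']
  | single ij u =>
    rw [LY_single, polyExt_single, polyExt_single, pow_succ', Module.End.mul_apply,
      (semiconj_pow (commute_LX_LY (W := W)).symm ij.1).eq]

theorem map_polyExt (G : TP W →ₗ[ℂ] TP W') (hX : Function.Semiconj G LX LX)
    (hY : Function.Semiconj G LY LY) (F : U →ₗ[ℂ] TP W) (P : TP U) :
    G (polyExt F P) = polyExt (G ∘ₗ F) P := by
  induction P using Finsupp.induction_linear with
  | zero => simp
  | add P P' hP hP' => simp only [map_add, hP, hP']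
  | single ij u => simp [polyExt_single, (semiconj_pow hX _).eq, (semiconj_pow hY _).eq]

theorem polyExt_mapRange (F : U →ₗ[ℂ] TP W) (f : V →ₗ[ℂ] U) (P : TP V) :
    polyExt F (Finsupp.mapRange.linearMap f P) = polyExt (F ∘ₗ f) P := by
  induction P using Finsupp.induction_linear with
  | zero => simp
  | add P P' hP hP' => simp only [map_add, hP, hP']
  | single ij v => simp [polyExt_single]

theorem polyExt_PD {F : U →ₗ[ℂ] TP W} {d : U →ₗ[ℂ] U} {B : TP W →ₗ[ℂ] TP W}
    (hX : Function.Commute B LX) (hY : Function.Commute B LY) (h : ∀ u, F (d u) = B (F u))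
    (P : TP U) : polyExt F (PD d P) = B (polyExt F P) := by
  rw [PD, polyExt_mapRange, map_polyExt B hX hY]
  exact congrArg (polyExt · P) (LinearMap.ext h)

theorem map_evA_eq_of_semiconj (Φ : TP U →ₗ[ℂ] TP W) {B B' : TP U →ₗ[ℂ] TP U}
    {C : TP W →ₗ[ℂ] TP W} (h : Function.Semiconj Φ B C) (h' : Function.Semiconj Φ B' C)
    (q : OP U) : Φ (evA B q) = Φ (evA B' q) := by
  induction q using Finsupp.induction_linear with
  | zero => simp
  | add p q hp hq => simp only [map_add, hp, hq]
  | single k u => simp only [evA_single, (semiconj_pow h k).eq, (semiconj_pow h' k).eq]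

/-- The exchange `λ ↔ μ`. -/
def swT : TP W →ₗ[ℂ] TP W := Finsupp.lmapDomain W ℂ Prod.swap

theorem swT_single (ij : ℕ × ℕ) (w : W) :
    swT (Finsupp.single ij w) = Finsupp.single ij.swap w := by
  simp [swT]

theorem swT_LX : Function.Semiconj (swT : TP W →ₗ[ℂ] TP W) LX LY := by
  intro q
  simp only [swT, LX, LY, Finsupp.lmapDomain_apply, ← Finsupp.mapDomain_comp]
  rfl

theorem swT_LY : Function.Semiconj (swT : TP W →ₗ[ℂ] TP W) LY LX := by
  intro q
  simp only [swT, LX, LY, Finsupp.lmapDomain_apply, ← Finsupp.mapDomain_comp]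
  rfl

theorem swT_LX_add_LY :
    Function.Semiconj (swT : TP W →ₗ[ℂ] TP W) ⇑(LX + LY : TP W →ₗ[ℂ] TP W)
      ⇑(LX + LY : TP W →ₗ[ℂ] TP W) := fun q => by
  simp only [LinearMap.add_apply, map_add, swT_LX q, swT_LY q, add_comm]

theorem swT_evA {A B : TP W →ₗ[ℂ] TP W} (h : Function.Semiconj swT A B) (p : OP W) :
    swT (evA A p) = evA B p := by
  induction p using Finsupp.induction_linear with
  | zero => simp
  | add p q hp hq => simp only [map_add, hp, hq]
  | single k w => rw [evA_single, evA_single, (semiconj_pow h k).eq, swT_single]; rfl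

theorem swT_polyExt (F : U →ₗ[ℂ] TP W) (P : TP U) :
    swT (polyExt F P) = polyExt (swT ∘ₗ F) (swT P) := by
  induction P using Finsupp.induction_linear with
  | zero => simp
  | add P P' hP hP' => simp only [map_add, hP, hP']
  | single ij u =>
    rw [swT_single, polyExt_single, polyExt_single, (semiconj_pow swT_LX _).eq,
      (semiconj_pow swT_LY _).eq, commute_pow_LX_pow_LY]
    rfl

end PolyExt

section Extensions

variable {U V W : Type*} [AddCommGroup U] [Module ℂ U] [AddCommGroup V] [Module ℂ V]
  [AddCommGroup W] [Module ℂ W] (n : U →ₗ[ℂ] V →ₗ[ℂ] OP W) (A : TP W →ₗ[ℂ] TP W)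

theorem exL_add_left (P P' : TP U) (v : V) : exL n A (P + P') v = exL n A P v + exL n A P' v := by
  simp only [exL_eq_polyExt, map_add]

theorem exL_sub_left (P P' : TP U) (v : V) : exL n A (P - P') v = exL n A P v - exL n A P' v := by
  simp only [exL_eq_polyExt, map_sub]

theorem exR_add_right (u : U) (P P' : TP V) : exR n A u (P + P') = exR n A u P + exR n A u P' := by
  simp only [exR_eq_polyExt, map_add]

theorem exR_sub_right (u : U) (P P' : TP V) : exR n A u (P - P') = exR n A u P - exR n A u P' := by
  simp only [exR_eq_polyExt, map_sub]

theorem exL_add_right (P : TP U) (v v' : V) :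
    exL n A P (v + v') = exL n A P v + exL n A P v' := by
  simp only [exL_eq_polyExt, map_add, LinearMap.comp_add, polyExt_add]

theorem exR_add_left (u u' : U) (P : TP V) :
    exR n A (u + u') P = exR n A u P + exR n A u' P := by
  simp only [exR_eq_polyExt, map_add, LinearMap.comp_add, polyExt_add]

@[simp]
theorem exL_zero_right (P : TP U) : exL n A P 0 = 0 := by
  simp [exL]

@[simp]
theorem exR_zero_left (P : TP V) : exR n A 0 P = 0 := by
  simp [exR]

@[simp]
theorem ev2_zero_left (v : V) : ev2 n A 0 v = 0 := by
  simp [ev2]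

@[simp]
theorem ev2_zero_right (u : U) : ev2 n A u 0 = 0 := by
  simp [ev2]

theorem exL_PD {dU : U →ₗ[ℂ] U} (hd : ∀ u v, n (dU u) v = -lsh (n u v))
    (hX : Function.Commute A LX) (hY : Function.Commute A LY) (P : TP U) (v : V) :
    exL n A (PD dU P) v = -A (exL n A P v) := by
  simp only [exL_eq_polyExt]
  refine polyExt_PD (B := -A) (fun q => by simp [hX q]) (fun q => by simp [hY q]) (fun u => ?_) P
  simp [hd, evA_lsh]

theorem exR_PD {dV : V →ₗ[ℂ] V} {dW : W →ₗ[ℂ] W}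
    (hd : ∀ u v, n u (dV v) = lsh (n u v) + pD dW (n u v))
    (hX : Function.Commute A LX) (hY : Function.Commute A LY) (hD : Function.Commute (PD dW) A)
    (u : U) (P : TP V) :
    exR n A u (PD dV P) = (A + PD dW) (exR n A u P) := by
  simp only [exR_eq_polyExt]
  refine polyExt_PD (B := A + PD dW) (fun q => ?_) (fun q => ?_) (fun v => ?_) P
  · simp [hX q, commute_PD_LX dW q]
  · simp [hY q, commute_PD_LY dW q]
  · rw [LinearMap.comp_apply, hd, map_add, evA_lsh, pD, evA_mapRange dW hD]
    rfl

theorem swT_ev2 {B C : TP W →ₗ[ℂ] TP W} (h : Function.Semiconj swT B C) (u : U) (v : V) :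
    swT (ev2 n B u v) = ev2 n C u v :=
  swT_evA h _

theorem swT_exL {B C : TP W →ₗ[ℂ] TP W} (h : Function.Semiconj swT B C) (P : TP U) (v : V) :
    swT (exL n B P v) = exL n C (swT P) v := by
  rw [exL_eq_polyExt, exL_eq_polyExt, swT_polyExt]
  exact congrArg (polyExt · _) (LinearMap.ext fun u => swT_evA h _)

theorem swT_exR {B C : TP W →ₗ[ℂ] TP W} (h : Function.Semiconj swT B C) (u : U) (P : TP V) :
    swT (exR n B u P) = exR n C u (swT P) := by
  rw [exR_eq_polyExt, exR_eq_polyExt, swT_polyExt]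
  exact congrArg (polyExt · _) (LinearMap.ext fun v => swT_evA h _)

end Extensions

section Transport

variable {U V W : Type*} [AddCommGroup U] [Module ℂ U] [AddCommGroup V] [Module ℂ V]
  [AddCommGroup W] [Module ℂ W] (n : U →ₗ[ℂ] V →ₗ[ℂ] OP W)

theorem neg_LX_sub_PD (d : W →ₗ[ℂ] W) : -LX - PD d = nX d := rfl

theorem neg_LY_sub_PD (d : W →ₗ[ℂ] W) : -LY - PD d = nY d := rfl

theorem neg_LX_add_LY_sub_PD (d : W →ₗ[ℂ] W) : -(LX + LY) - PD d = nXY d := by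
  rw [nXY]
  abel

theorem commute_LX_add_LY_LX : Function.Commute (LX + LY : TP W →ₗ[ℂ] TP W) LX := fun q => by
  simp only [LinearMap.add_apply, map_add, commute_LX_LY q]

theorem commute_LX_add_LY_LY : Function.Commute (LX + LY : TP W →ₗ[ℂ] TP W) LY := fun q => by
  simp only [LinearMap.add_apply, map_add, commute_LX_LY q]

theorem commute_nXY_LX (d : W →ₗ[ℂ] W) : Function.Commute (nXY d) LX := fun q => by
  simp only [nXY, LinearMap.sub_apply, LinearMap.neg_apply, map_sub, map_neg, commute_LX_LY q,
    commute_PD_LX d q]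

theorem commute_nXY_LY (d : W →ₗ[ℂ] W) : Function.Commute (nXY d) LY := fun q => by
  simp only [nXY, LinearMap.sub_apply, LinearMap.neg_apply, map_sub, map_neg, commute_LX_LY q,
    commute_PD_LY d q]

theorem commute_PD_nXY (d : W →ₗ[ℂ] W) : Function.Commute (PD d) (nXY d) := fun q => by
  simp only [nXY, LinearMap.sub_apply, LinearMap.neg_apply, map_sub, map_neg, commute_PD_LX d q,
    commute_PD_LY d q]

/- Sesquilinearity lets `∂` act on the left factor of a `(λ+μ)`-product as `−λ−μ`,
so there the substitution `−μ−∂` becomes `λ`, and `−λ−∂` becomes `μ`. -/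
theorem exL_evA_nY {dU : U →ₗ[ℂ] U} (hd : ∀ u v, n (dU u) v = -lsh (n u v)) (q : OP U)
    (v : V) : exL n (LX + LY) (evA (nY dU) q) v = exL n (LX + LY) (evA LX q) v := by
  simp only [exL_eq_polyExt]
  refine map_evA_eq_of_semiconj (polyExt (evA (LX + LY) ∘ₗ n.flip v)) (fun P => ?_)
    (polyExt_LX _) q
  have hPD := exL_PD n (LX + LY) hd commute_LX_add_LY_LX commute_LX_add_LY_LY P v
  rw [exL_eq_polyExt, exL_eq_polyExt] at hPD
  simp only [nY, LinearMap.sub_apply, LinearMap.neg_apply, map_sub, map_neg, polyExt_LY, hPD,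
    LinearMap.add_apply]
  abel

theorem exL_evA_nX {dU : U →ₗ[ℂ] U} (hd : ∀ u v, n (dU u) v = -lsh (n u v)) (q : OP U)
    (v : V) : exL n (LX + LY) (evA (nX dU) q) v = exL n (LX + LY) (evA LY q) v := by
  simp only [exL_eq_polyExt]
  refine map_evA_eq_of_semiconj (polyExt (evA (LX + LY) ∘ₗ n.flip v)) (fun P => ?_)
    (polyExt_LY _) q
  have hPD := exL_PD n (LX + LY) hd commute_LX_add_LY_LX commute_LX_add_LY_LY P v
  rw [exL_eq_polyExt, exL_eq_polyExt] at hPD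
  simp only [nX, LinearMap.sub_apply, LinearMap.neg_apply, map_sub, map_neg, polyExt_LX, hPD,
    LinearMap.add_apply]
  abel

theorem exR_evA_nX {dV : V →ₗ[ℂ] V} {dW : W →ₗ[ℂ] W}
    (hd : ∀ u v, n u (dV v) = lsh (n u v) + pD dW (n u v)) (u : U) (q : OP V) :
    exR n (nXY dW) u (evA (nX dV) q) = exR n (nXY dW) u (evA LY q) := by
  simp only [exR_eq_polyExt]
  refine map_evA_eq_of_semiconj (polyExt (evA (nXY dW) ∘ₗ n u)) (fun P => ?_)
    (polyExt_LY _) q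
  have hPD := exR_PD n (nXY dW) hd (commute_nXY_LX dW) (commute_nXY_LY dW) (commute_PD_nXY dW) u P
  rw [exR_eq_polyExt, exR_eq_polyExt] at hPD
  simp only [nX, LinearMap.sub_apply, LinearMap.neg_apply, map_sub, map_neg, polyExt_LX, hPD]
  simp only [nXY, LinearMap.add_apply, LinearMap.sub_apply, LinearMap.neg_apply]
  abel

end Transport

section Defect

variable {L : Type*} [AddCommGroup L] [Module ℂ L]

/-- `(a_λ b)_{λ+μ} c − a_λ (b_μ c) − (b_μ a)_{λ+μ} c + b_μ (a_λ c)`. -/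
def lsymDefect (M : L →ₗ[ℂ] L →ₗ[ℂ] OP L) (a b c : L) : TP L :=
  exL M (LX + LY) (ev2 M LX a b) c - exR M LX a (ev2 M LY b c)
    - exL M (LX + LY) (ev2 M LY b a) c + exR M LY b (ev2 M LX a c)

variable (M : L →ₗ[ℂ] L →ₗ[ℂ] OP L)

theorem isLSCA_iff_forall_lsymDefect_eq_zero {d : L →ₗ[ℂ] L} (hM : ConfBilin d d d M) :
    IsLSCA d M ↔ ∀ a b c, lsymDefect M a b c = 0 := by
  refine ⟨fun h a b c => ?_, fun h => ⟨hM, fun a b c => ?_⟩⟩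
  · rw [lsymDefect, h.lsym a b c]; abel
  · rw [← sub_eq_zero, ← h a b c, lsymDefect]; abel

theorem lsymDefect_add_left (a a' b c : L) :
    lsymDefect M (a + a') b c = lsymDefect M a b c + lsymDefect M a' b c := by
  simp only [lsymDefect, ev2, map_add, LinearMap.add_apply, exL_add_left, exR_add_left,
    exR_add_right]
  abel

theorem lsymDefect_add_middle (a b b' c : L) :
    lsymDefect M a (b + b') c = lsymDefect M a b c + lsymDefect M a b' c := by
  simp only [lsymDefect, ev2, map_add, LinearMap.add_apply, exL_add_left, exR_add_left,
    exR_add_right]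
  abel

theorem lsymDefect_add_right (a b c c' : L) :
    lsymDefect M a b (c + c') = lsymDefect M a b c + lsymDefect M a b c' := by
  simp only [lsymDefect, ev2, map_add, exL_add_right, exR_add_right]
  abel

theorem lsymDefect_swap (a b c : L) : lsymDefect M b a c = -swT (lsymDefect M a b c) := by
  simp only [lsymDefect, map_sub, map_add, swT_exL M swT_LX_add_LY, swT_exR M swT_LX,
    swT_exR M swT_LY, swT_ev2 M swT_LX, swT_ev2 M swT_LY]
  abel

end Defect

section DirectSum

variable {R Q : Type*} [AddCommGroup R] [Module ℂ R] [AddCommGroup Q] [Module ℂ Q]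

def inlT (R Q : Type*) [AddCommGroup R] [Module ℂ R] [AddCommGroup Q] [Module ℂ Q] :
    TP R →ₗ[ℂ] TP (R × Q) := Finsupp.mapRange.linearMap (LinearMap.inl ℂ R Q)

def inrT (R Q : Type*) [AddCommGroup R] [Module ℂ R] [AddCommGroup Q] [Module ℂ Q] :
    TP Q →ₗ[ℂ] TP (R × Q) := Finsupp.mapRange.linearMap (LinearMap.inr ℂ R Q)

theorem inlT_add_inrT_eq_zero_iff {p : TP R} {q : TP Q} :
    inlT R Q p + inrT R Q q = 0 ↔ p = 0 ∧ q = 0 := by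
  simp [inlT, inrT, Finsupp.ext_iff, Prod.ext_iff, forall_and]

theorem polyExt_inlT {U : Type*} [AddCommGroup U] [Module ℂ U] (F : R × Q →ₗ[ℂ] TP U)
    (P : TP R) : polyExt F (inlT R Q P) = polyExt (F ∘ₗ LinearMap.inl ℂ R Q) P :=
  polyExt_mapRange F _ P

theorem polyExt_inrT {U : Type*} [AddCommGroup U] [Module ℂ U] (F : R × Q →ₗ[ℂ] TP U)
    (P : TP Q) : polyExt F (inrT R Q P) = polyExt (F ∘ₗ LinearMap.inr ℂ R Q) P :=
  polyExt_mapRange F _ P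

theorem polyExt_eq_inlT_add_inrT {U : Type*} [AddCommGroup U] [Module ℂ U]
    {F : U →ₗ[ℂ] TP (R × Q)} {F₁ : U →ₗ[ℂ] TP R} {F₂ : U →ₗ[ℂ] TP Q}
    (h : ∀ u, F u = inlT R Q (F₁ u) + inrT R Q (F₂ u)) (P : TP U) :
    polyExt F P = inlT R Q (polyExt F₁ P) + inrT R Q (polyExt F₂ P) := by
  rw [map_polyExt (inlT R Q) (semiconj_mapRange_LX _) (semiconj_mapRange_LY _),
    map_polyExt (inrT R Q) (semiconj_mapRange_LX _) (semiconj_mapRange_LY _), ← polyExt_add]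
  exact congrArg (polyExt · P) (LinearMap.ext h)

theorem forall_lsymDefect_prod_eq_zero_iff (M : R × Q →ₗ[ℂ] R × Q →ₗ[ℂ] OP (R × Q)) :
    (∀ e₁ e₂ e₃, lsymDefect M e₁ e₂ e₃ = 0) ↔
      (∀ a b c : R, lsymDefect M (a, 0) (b, 0) (c, 0) = 0) ∧
      (∀ (a b : R) (x : Q), lsymDefect M (0, x) (a, 0) (b, 0) = 0) ∧
      (∀ (a b : R) (x : Q), lsymDefect M (a, 0) (b, 0) (0, x) = 0) ∧
      (∀ (a : R) (x y : Q), lsymDefect M (a, 0) (0, x) (0, y) = 0) ∧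
      (∀ (a : R) (x y : Q), lsymDefect M (0, x) (0, y) (a, 0) = 0) ∧
      (∀ x y z : Q, lsymDefect M (0, x) (0, y) (0, z) = 0) := by
  refine ⟨fun h => ⟨fun _ _ _ => h _ _ _, fun _ _ _ => h _ _ _, fun _ _ _ => h _ _ _,
    fun _ _ _ => h _ _ _, fun _ _ _ => h _ _ _, fun _ _ _ => h _ _ _⟩, ?_⟩
  rintro ⟨hrrr, hqrr, hrrq, hrqq, hqqr, hqqq⟩ ⟨a, x⟩ ⟨b, y⟩ ⟨c, z⟩
  have hrqr (a b : R) (x : Q) : lsymDefect M (a, 0) (0, x) (b, 0) = 0 := by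
    rw [lsymDefect_swap, hqrr, map_zero, neg_zero]
  have hqrq (a : R) (x y : Q) : lsymDefect M (0, x) (a, 0) (0, y) = 0 := by
    rw [lsymDefect_swap, hrqq, map_zero, neg_zero]
  have split (a : R) (x : Q) : ((a, x) : R × Q) = (a, 0) + (0, x) := by simp
  rw [split a x, split b y, split c z]
  simp only [lsymDefect_add_left, lsymDefect_add_middle, lsymDefect_add_right, hrrr, hqrr,
    hrrq, hrqq, hqqr, hqqq, hrqr, hqrq, add_zero]

structure SumCompatible (dR : R →ₗ[ℂ] R) (dQ : Q →ₗ[ℂ] Q) (AE : TP (R × Q) →ₗ[ℂ] TP (R × Q))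
    (AR : TP R →ₗ[ℂ] TP R) (AQ : TP Q →ₗ[ℂ] TP Q) : Prop where
  inl : Function.Semiconj (inlT R Q) AR AE
  inr : Function.Semiconj (inrT R Q) AQ AE
  commR : Function.Commute (PD dR) AR
  commQ : Function.Commute (PD dQ) AQ

variable (dR : R →ₗ[ℂ] R) (dQ : Q →ₗ[ℂ] Q)

theorem sumCompatible_LX : SumCompatible dR dQ LX LX LX :=
  ⟨semiconj_mapRange_LX _, semiconj_mapRange_LX _, commute_PD_LX dR, commute_PD_LX dQ⟩

theorem sumCompatible_LY : SumCompatible dR dQ LY LY LY :=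
  ⟨semiconj_mapRange_LY _, semiconj_mapRange_LY _, commute_PD_LY dR, commute_PD_LY dQ⟩

theorem sumCompatible_LX_add_LY : SumCompatible dR dQ (LX + LY) (LX + LY) (LX + LY) :=
  ⟨semiconj_mapRange_LX_add_LY _, semiconj_mapRange_LX_add_LY _, commute_PD_LX_add_LY dR,
    commute_PD_LX_add_LY dQ⟩

variable {dR dQ} {AE : TP (R × Q) →ₗ[ℂ] TP (R × Q)} {AR : TP R →ₗ[ℂ] TP R}
  {AQ : TP Q →ₗ[ℂ] TP Q}

theorem SumCompatible.evA_inlP (h : SumCompatible dR dQ AE AR AQ) (p : OP R) :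
    evA AE (inlP R Q p) = inlT R Q (evA AR p) :=
  evA_mapRange _ h.inl p

theorem SumCompatible.evA_inrP (h : SumCompatible dR dQ AE AR AQ) (q : OP Q) :
    evA AE (inrP R Q q) = inrT R Q (evA AQ q) :=
  evA_mapRange _ h.inr q

end DirectSum

section UnifiedProduct

variable {R Q : Type*} [AddCommGroup R] [Module ℂ R] [AddCommGroup Q] [Module ℂ Q]
  (dR : R →ₗ[ℂ] R) (dQ : Q →ₗ[ℂ] Q) (Ω : ExtDatum dR dQ) (m : R →ₗ[ℂ] R →ₗ[ℂ] OP R)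

theorem uprod_confBilin (hm : ConfBilin dR dR dR m) :
    ConfBilin (dR.prodMap dQ) (dR.prodMap dQ) (dR.prodMap dQ) (uprod dR dQ Ω m) := by
  have inlP_lsh (p : OP R) : inlP R Q (lsh p) = lsh (inlP R Q p) := semiconj_mapRange_lsh _ p
  have inrP_lsh (q : OP Q) : inrP R Q (lsh q) = lsh (inrP R Q q) := semiconj_mapRange_lsh _ q
  have inlP_pD (p : OP R) : inlP R Q (pD dR p) = pD (dR.prodMap dQ) (inlP R Q p) := by
    ext <;> simp [inlP, pD]
  have inrP_pD (q : OP Q) : inrP R Q (pD dQ q) = pD (dR.prodMap dQ) (inrP R Q q) := by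
    ext <;> simp [inrP, pD]
  constructor
  · intro u v
    rw [uprod_apply, uprod_apply]
    simp only [LinearMap.prodMap_apply]
    rw [hm.dleft, Ω.hphi.dleft, Ω.hpsi.dright, Ω.hg.dleft, Ω.ho.dleft, Ω.hl.dleft,
      Ω.hr.dright, evA1_nD_lsh_add_pD, evA1_nD_lsh_add_pD]
    simp only [map_add, map_neg, inlP_lsh, inrP_lsh]
    abel
  · intro u v
    rw [uprod_apply, uprod_apply]
    simp only [LinearMap.prodMap_apply]
    rw [hm.dright, Ω.hphi.dright, Ω.hpsi.dleft, Ω.hg.dright, Ω.ho.dright, Ω.hl.dright,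
      Ω.hr.dleft, evA1_nD_neg_lsh, evA1_nD_neg_lsh]
    simp only [map_add, inlP_lsh, inrP_lsh, ← inlP_pD, ← inrP_pD]
    abel

variable {dR dQ} {AE : TP (R × Q) →ₗ[ℂ] TP (R × Q)} {AR : TP R →ₗ[ℂ] TP R}
  {AQ : TP Q →ₗ[ℂ] TP Q}

theorem ev2_uprod (h : SumCompatible dR dQ AE AR AQ) (a : R) (x : Q) (b : R) (y : Q) :
    ev2 (uprod dR dQ Ω m) AE (a, x) (b, y)
      = inlT R Q (ev2 m AR a b + ev2 Ω.phi AR x b + ev2 Ω.psi (-AR - PD dR) y a + ev2 Ω.g AR x y)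
        + inrT R Q (ev2 Ω.o AQ x y + ev2 Ω.l AQ a y + ev2 Ω.r (-AQ - PD dQ) b x) := by
  simp only [ev2, uprod_apply, map_add, h.evA_inlP, h.evA_inrP, evA_evA1_nD dR h.commR,
    evA_evA1_nD dQ h.commQ]

theorem exL_uprod_inlT (h : SumCompatible dR dQ AE AR AQ) (P : TP R) (b : R) (y : Q) :
    exL (uprod dR dQ Ω m) AE (inlT R Q P) (b, y)
      = inlT R Q (exL m AR P b + exR Ω.psi (-AR - PD dR) y P) + inrT R Q (exL Ω.l AQ P y) := by
  simp only [exL_eq_polyExt, exR_eq_polyExt, ← polyExt_add, polyExt_inlT]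
  refine polyExt_eq_inlT_add_inrT (fun u => (ev2_uprod Ω m h u 0 b y).trans ?_) P
  simp only [ev2_zero_left, ev2_zero_right, add_zero, zero_add]
  rfl

theorem exL_uprod_inrT (h : SumCompatible dR dQ AE AR AQ) (P : TP Q) (b : R) (y : Q) :
    exL (uprod dR dQ Ω m) AE (inrT R Q P) (b, y)
      = inlT R Q (exL Ω.phi AR P b + exL Ω.g AR P y)
        + inrT R Q (exL Ω.o AQ P y + exR Ω.r (-AQ - PD dQ) b P) := by
  simp only [exL_eq_polyExt, exR_eq_polyExt, ← polyExt_add, polyExt_inrT]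
  refine polyExt_eq_inlT_add_inrT (fun u => (ev2_uprod Ω m h 0 u b y).trans ?_) P
  simp only [ev2_zero_left, ev2_zero_right, add_zero, zero_add]
  rfl

theorem exR_uprod_inlT (h : SumCompatible dR dQ AE AR AQ) (a : R) (x : Q) (P : TP R) :
    exR (uprod dR dQ Ω m) AE (a, x) (inlT R Q P)
      = inlT R Q (exR m AR a P + exR Ω.phi AR x P) + inrT R Q (exL Ω.r (-AQ - PD dQ) P x) := by
  simp only [exL_eq_polyExt, exR_eq_polyExt, ← polyExt_add, polyExt_inlT]
  refine polyExt_eq_inlT_add_inrT (fun u => (ev2_uprod Ω m h a x u 0).trans ?_) P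
  simp only [ev2_zero_left, ev2_zero_right, add_zero, zero_add]
  rfl

theorem exR_uprod_inrT (h : SumCompatible dR dQ AE AR AQ) (a : R) (x : Q) (P : TP Q) :
    exR (uprod dR dQ Ω m) AE (a, x) (inrT R Q P)
      = inlT R Q (exL Ω.psi (-AR - PD dR) P a + exR Ω.g AR x P)
        + inrT R Q (exR Ω.o AQ x P + exR Ω.l AQ a P) := by
  simp only [exL_eq_polyExt, exR_eq_polyExt, ← polyExt_add, polyExt_inrT]
  refine polyExt_eq_inlT_add_inrT (fun u => (ev2_uprod Ω m h a x 0 u).trans ?_) P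
  simp only [ev2_zero_left, ev2_zero_right, add_zero, zero_add]
  rfl

end UnifiedProduct

section Blocks

variable {R Q : Type*} [AddCommGroup R] [Module ℂ R] [AddCommGroup Q] [Module ℂ Q]
  {dR : R →ₗ[ℂ] R} {dQ : Q →ₗ[ℂ] Q} (Ω : ExtDatum dR dQ) (m : R →ₗ[ℂ] R →ₗ[ℂ] OP R)

theorem lsymDefect_uprod_rrr (a b c : R) :
    lsymDefect (uprod dR dQ Ω m) (a, 0) (b, 0) (c, 0) = inlT R Q (lsymDefect m a b c) := by
  simp only [lsymDefect, ev2_uprod Ω m (sumCompatible_LX dR dQ),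
    ev2_uprod Ω m (sumCompatible_LY dR dQ), exL_uprod_inlT Ω m (sumCompatible_LX_add_LY dR dQ),
    exR_uprod_inlT Ω m (sumCompatible_LX dR dQ), exR_uprod_inlT Ω m (sumCompatible_LY dR dQ),
    ev2_zero_left, ev2_zero_right, exL_zero_right, exR_zero_left, map_zero, add_zero,
    neg_LX_sub_PD, neg_LY_sub_PD, neg_LX_add_LY_sub_PD, map_add, map_sub]

theorem lsymDefect_uprod_qrr_eq_zero_iff (hm : ConfBilin dR dR dR m) (a b : R) (x : Q) :
    lsymDefect (uprod dR dQ Ω m) (0, x) (a, 0) (b, 0) = 0 ↔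
      exL m (LX + LY) (ev2 Ω.phi LX x a - ev2 Ω.psi LX x a) b
            + exL Ω.phi (LX + LY) (ev2 Ω.r LY a x - ev2 Ω.l LY a x) b
          = exR Ω.phi LX x (ev2 m LY a b) - exR m LY a (ev2 Ω.phi LX x b)
            - exL Ω.psi (nY dR) (ev2 Ω.r (nX dQ) b x) a ∧
        exR Ω.r (nXY dQ) b (ev2 Ω.r LY a x - ev2 Ω.l LY a x)
          = exL Ω.r (nX dQ) (ev2 m LY a b) x - exR Ω.l LY a (ev2 Ω.r (nX dQ) b x) := by
  refine (Eq.congr_left ?_).trans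
    (inlT_add_inrT_eq_zero_iff.trans (and_congr sub_eq_zero sub_eq_zero))
  simp only [lsymDefect, ev2_uprod Ω m (sumCompatible_LX dR dQ),
    ev2_uprod Ω m (sumCompatible_LY dR dQ), exL_add_left, exR_add_right,
    exL_uprod_inlT Ω m (sumCompatible_LX_add_LY dR dQ),
    exL_uprod_inrT Ω m (sumCompatible_LX_add_LY dR dQ),
    exR_uprod_inlT Ω m (sumCompatible_LX dR dQ), exR_uprod_inlT Ω m (sumCompatible_LY dR dQ),
    exR_uprod_inrT Ω m (sumCompatible_LY dR dQ), ev2_zero_left, ev2_zero_right, exL_zero_right,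
    exR_zero_left, map_zero, add_zero, zero_add, neg_LX_sub_PD, neg_LY_sub_PD,
    neg_LX_add_LY_sub_PD, exL_sub_left, exR_sub_right, map_add, map_sub]
  simp only [ev2, exL_evA_nY m hm.dleft, exL_evA_nX Ω.phi Ω.hphi.dleft,
    exR_evA_nX Ω.r Ω.hr.dright]
  abel

theorem lsymDefect_uprod_rrq_eq_zero_iff (a b : R) (x : Q) :
    lsymDefect (uprod dR dQ Ω m) (a, 0) (b, 0) (0, x) = 0 ↔
      exR Ω.psi (nXY dR) x (ev2 m LX a b - ev2 m LY b a)
          = exR m LX a (ev2 Ω.psi (nY dR) x b) - exR m LY b (ev2 Ω.psi (nX dR) x a)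
            + exL Ω.psi (nX dR) (ev2 Ω.l LY b x) a - exL Ω.psi (nY dR) (ev2 Ω.l LX a x) b ∧
        exL Ω.l (LX + LY) (ev2 m LX a b) x - exL Ω.l (LX + LY) (ev2 m LY b a) x
          = exR Ω.l LX a (ev2 Ω.l LY b x) - exR Ω.l LY b (ev2 Ω.l LX a x) := by
  refine (Eq.congr_left ?_).trans
    (inlT_add_inrT_eq_zero_iff.trans (and_congr sub_eq_zero sub_eq_zero))
  simp only [lsymDefect, ev2_uprod Ω m (sumCompatible_LX dR dQ),
    ev2_uprod Ω m (sumCompatible_LY dR dQ), exR_add_right,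
    exL_uprod_inlT Ω m (sumCompatible_LX_add_LY dR dQ),
    exR_uprod_inlT Ω m (sumCompatible_LX dR dQ), exR_uprod_inrT Ω m (sumCompatible_LX dR dQ),
    exR_uprod_inlT Ω m (sumCompatible_LY dR dQ), exR_uprod_inrT Ω m (sumCompatible_LY dR dQ),
    ev2_zero_left, ev2_zero_right, exL_zero_right, exR_zero_left, map_zero, add_zero, zero_add,
    neg_LX_sub_PD, neg_LY_sub_PD, neg_LX_add_LY_sub_PD, exR_sub_right, map_add, map_sub]
  abel

theorem lsymDefect_uprod_rqq_eq_zero_iff (a : R) (x y : Q) :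
    lsymDefect (uprod dR dQ Ω m) (a, 0) (0, x) (0, y) = 0 ↔
      exR Ω.psi (nXY dR) y (ev2 Ω.psi LY x a - ev2 Ω.phi LY x a)
            + exL Ω.g (LX + LY) (ev2 Ω.l LX a x) y
            - exR m LX a (ev2 Ω.g LY x y)
            - exL Ω.psi (nX dR) (ev2 Ω.o LY x y) a
          = exL Ω.g (LX + LY) (ev2 Ω.r (nY dQ) a x) y
            - exR Ω.phi LY x (ev2 Ω.psi (nX dR) y a)
            - exR Ω.g LY x (ev2 Ω.l LX a y) ∧
        exL Ω.o (LX + LY) (ev2 Ω.l LX a x) y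
            + exL Ω.l (LX + LY) (ev2 Ω.psi (nX dR) x a) y
            - exR Ω.l LX a (ev2 Ω.o LY x y)
          = exL Ω.l (LX + LY) (ev2 Ω.phi LY x a) y
            + exL Ω.o (LX + LY) (ev2 Ω.r (nY dQ) a x) y
            - exL Ω.r (nY dQ) (ev2 Ω.psi (nX dR) y a) x
            - exR Ω.o LY x (ev2 Ω.l LX a y) := by
  refine (Eq.congr_left ?_).trans
    (inlT_add_inrT_eq_zero_iff.trans (and_congr sub_eq_zero sub_eq_zero))
  simp only [lsymDefect, ev2_uprod Ω m (sumCompatible_LX dR dQ),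
    ev2_uprod Ω m (sumCompatible_LY dR dQ), exL_add_left, exR_add_right,
    exL_uprod_inlT Ω m (sumCompatible_LX_add_LY dR dQ),
    exL_uprod_inrT Ω m (sumCompatible_LX_add_LY dR dQ),
    exR_uprod_inlT Ω m (sumCompatible_LX dR dQ), exR_uprod_inrT Ω m (sumCompatible_LX dR dQ),
    exR_uprod_inlT Ω m (sumCompatible_LY dR dQ), exR_uprod_inrT Ω m (sumCompatible_LY dR dQ),
    ev2_zero_left, ev2_zero_right, exL_zero_right, exR_zero_left, map_zero, add_zero, zero_add,
    neg_LX_sub_PD, neg_LY_sub_PD, neg_LX_add_LY_sub_PD, exR_sub_right, map_add, map_sub]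
  simp only [ev2, exR_evA_nX Ω.psi Ω.hpsi.dright]
  abel

theorem lsymDefect_uprod_qqr_eq_zero_iff (a : R) (x y : Q) :
    lsymDefect (uprod dR dQ Ω m) (0, x) (0, y) (a, 0) = 0 ↔
      exL m (LX + LY) (ev2 Ω.g LX x y - ev2 Ω.g LY y x) a
            + exL Ω.phi (LX + LY) (ev2 Ω.o LX x y - ev2 Ω.o LY y x) a
          = exR Ω.phi LX x (ev2 Ω.phi LY y a) - exR Ω.phi LY y (ev2 Ω.phi LX x a)
            + exR Ω.g LX x (ev2 Ω.r (nY dQ) a y) - exR Ω.g LY y (ev2 Ω.r (nX dQ) a x) ∧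
        exR Ω.r (nXY dQ) a (ev2 Ω.o LX x y - ev2 Ω.o LY y x)
          = exL Ω.r (nX dQ) (ev2 Ω.phi LY y a) x - exL Ω.r (nY dQ) (ev2 Ω.phi LX x a) y
            + exR Ω.o LX x (ev2 Ω.r (nY dQ) a y) - exR Ω.o LY y (ev2 Ω.r (nX dQ) a x) := by
  refine (Eq.congr_left ?_).trans
    (inlT_add_inrT_eq_zero_iff.trans (and_congr sub_eq_zero sub_eq_zero))
  simp only [lsymDefect, ev2_uprod Ω m (sumCompatible_LX dR dQ),
    ev2_uprod Ω m (sumCompatible_LY dR dQ), exL_add_left, exR_add_right,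
    exL_uprod_inlT Ω m (sumCompatible_LX_add_LY dR dQ),
    exL_uprod_inrT Ω m (sumCompatible_LX_add_LY dR dQ),
    exR_uprod_inlT Ω m (sumCompatible_LX dR dQ), exR_uprod_inrT Ω m (sumCompatible_LX dR dQ),
    exR_uprod_inlT Ω m (sumCompatible_LY dR dQ), exR_uprod_inrT Ω m (sumCompatible_LY dR dQ),
    ev2_zero_left, ev2_zero_right, exL_zero_right, exR_zero_left, map_zero, add_zero, zero_add,
    neg_LX_sub_PD, neg_LY_sub_PD, neg_LX_add_LY_sub_PD, exL_sub_left, exR_sub_right, map_add,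
    map_sub]
  abel

theorem lsymDefect_uprod_qqq_eq_zero_iff (x y z : Q) :
    lsymDefect (uprod dR dQ Ω m) (0, x) (0, y) (0, z) = 0 ↔
      exR Ω.psi (nXY dR) z (ev2 Ω.g LX x y) + exL Ω.g (LX + LY) (ev2 Ω.o LX x y) z
            - exR Ω.phi LX x (ev2 Ω.g LY y z) - exR Ω.g LX x (ev2 Ω.o LY y z)
          = exR Ω.psi (nXY dR) z (ev2 Ω.g LY y x) + exL Ω.g (LX + LY) (ev2 Ω.o LY y x) z
            - exR Ω.phi LY y (ev2 Ω.g LX x z) - exR Ω.g LY y (ev2 Ω.o LX x z) ∧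
        exL Ω.l (LX + LY) (ev2 Ω.g LX x y) z + exL Ω.o (LX + LY) (ev2 Ω.o LX x y) z
            - exL Ω.r (nX dQ) (ev2 Ω.g LY y z) x - exR Ω.o LX x (ev2 Ω.o LY y z)
          = exL Ω.l (LX + LY) (ev2 Ω.g LY y x) z + exL Ω.o (LX + LY) (ev2 Ω.o LY y x) z
            - exL Ω.r (nY dQ) (ev2 Ω.g LX x z) y - exR Ω.o LY y (ev2 Ω.o LX x z) := by
  refine (Eq.congr_left ?_).trans
    (inlT_add_inrT_eq_zero_iff.trans (and_congr sub_eq_zero sub_eq_zero))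
  simp only [lsymDefect, ev2_uprod Ω m (sumCompatible_LX dR dQ),
    ev2_uprod Ω m (sumCompatible_LY dR dQ), exL_add_left, exR_add_right,
    exL_uprod_inlT Ω m (sumCompatible_LX_add_LY dR dQ),
    exL_uprod_inrT Ω m (sumCompatible_LX_add_LY dR dQ),
    exR_uprod_inlT Ω m (sumCompatible_LX dR dQ), exR_uprod_inrT Ω m (sumCompatible_LX dR dQ),
    exR_uprod_inlT Ω m (sumCompatible_LY dR dQ), exR_uprod_inrT Ω m (sumCompatible_LY dR dQ),
    ev2_zero_left, ev2_zero_right, exL_zero_right, exR_zero_left, add_zero, zero_add,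
    neg_LX_sub_PD, neg_LY_sub_PD, neg_LX_add_LY_sub_PD, map_add, map_sub]
  abel

end Blocks

/-- **Theorem 3.2.** Let `R` be a left-symmetric conformal algebra, `Q` a ℂ[∂]-module and
`Ω(R,Q) = (φ, ψ, l, r, g, ∘)` an extending datum of `R` by `Q`.  The unified product `R ♮ Q`
is a left-symmetric conformal algebra if and only if the compatibility conditions
(LC1)–(LC10) hold. -/
theorem unified_product_is_LSCA_iff
    {R Q : Type*} [AddCommGroup R] [Module ℂ R] [AddCommGroup Q] [Module ℂ Q]
    (dR : R →ₗ[ℂ] R) (dQ : Q →ₗ[ℂ] Q)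
    (m : R →ₗ[ℂ] R →ₗ[ℂ] OP R) (hm : IsLSCA dR m)
    (Ω : ExtDatum dR dQ) :
    IsLSCA (dR.prodMap dQ) (uprod dR dQ Ω m) ↔
      -- (LC1)
      ((∀ (a b : R) (x : Q),
        exL m (LX + LY) (ev2 Ω.phi LX x a - ev2 Ω.psi LX x a) b
            + exL Ω.phi (LX + LY) (ev2 Ω.r LY a x - ev2 Ω.l LY a x) b
          = exR Ω.phi LX x (ev2 m LY a b) - exR m LY a (ev2 Ω.phi LX x b)
            - exL Ω.psi (nY dR) (ev2 Ω.r (nX dQ) b x) a) ∧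
      -- (LC2)
      (∀ (a b : R) (x : Q),
        exR Ω.r (nXY dQ) b (ev2 Ω.r LY a x - ev2 Ω.l LY a x)
          = exL Ω.r (nX dQ) (ev2 m LY a b) x - exR Ω.l LY a (ev2 Ω.r (nX dQ) b x)) ∧
      -- (LC3)
      (∀ (a b : R) (x : Q),
        exR Ω.psi (nXY dR) x (ev2 m LX a b - ev2 m LY b a)
          = exR m LX a (ev2 Ω.psi (nY dR) x b) - exR m LY b (ev2 Ω.psi (nX dR) x a)
            + exL Ω.psi (nX dR) (ev2 Ω.l LY b x) a - exL Ω.psi (nY dR) (ev2 Ω.l LX a x) b) ∧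
      -- (LC4)
      (∀ (a b : R) (x : Q),
        exL Ω.l (LX + LY) (ev2 m LX a b) x - exL Ω.l (LX + LY) (ev2 m LY b a) x
          = exR Ω.l LX a (ev2 Ω.l LY b x) - exR Ω.l LY b (ev2 Ω.l LX a x)) ∧
      -- (LC5)
      (∀ (a : R) (x y : Q),
        exR Ω.psi (nXY dR) y (ev2 Ω.psi LY x a - ev2 Ω.phi LY x a)
            + exL Ω.g (LX + LY) (ev2 Ω.l LX a x) y
            - exR m LX a (ev2 Ω.g LY x y)
            - exL Ω.psi (nX dR) (ev2 Ω.o LY x y) a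
          = exL Ω.g (LX + LY) (ev2 Ω.r (nY dQ) a x) y
            - exR Ω.phi LY x (ev2 Ω.psi (nX dR) y a)
            - exR Ω.g LY x (ev2 Ω.l LX a y)) ∧
      -- (LC6)
      (∀ (a : R) (x y : Q),
        exL Ω.o (LX + LY) (ev2 Ω.l LX a x) y
            + exL Ω.l (LX + LY) (ev2 Ω.psi (nX dR) x a) y
            - exR Ω.l LX a (ev2 Ω.o LY x y)
          = exL Ω.l (LX + LY) (ev2 Ω.phi LY x a) y
            + exL Ω.o (LX + LY) (ev2 Ω.r (nY dQ) a x) y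
            - exL Ω.r (nY dQ) (ev2 Ω.psi (nX dR) y a) x
            - exR Ω.o LY x (ev2 Ω.l LX a y)) ∧
      -- (LC7)
      (∀ (a : R) (x y : Q),
        exL m (LX + LY) (ev2 Ω.g LX x y - ev2 Ω.g LY y x) a
            + exL Ω.phi (LX + LY) (ev2 Ω.o LX x y - ev2 Ω.o LY y x) a
          = exR Ω.phi LX x (ev2 Ω.phi LY y a) - exR Ω.phi LY y (ev2 Ω.phi LX x a)
            + exR Ω.g LX x (ev2 Ω.r (nY dQ) a y) - exR Ω.g LY y (ev2 Ω.r (nX dQ) a x)) ∧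
      -- (LC8)
      (∀ (a : R) (x y : Q),
        exR Ω.r (nXY dQ) a (ev2 Ω.o LX x y - ev2 Ω.o LY y x)
          = exL Ω.r (nX dQ) (ev2 Ω.phi LY y a) x - exL Ω.r (nY dQ) (ev2 Ω.phi LX x a) y
            + exR Ω.o LX x (ev2 Ω.r (nY dQ) a y) - exR Ω.o LY y (ev2 Ω.r (nX dQ) a x)) ∧
      -- (LC9)
      (∀ x y z : Q,
        exR Ω.psi (nXY dR) z (ev2 Ω.g LX x y) + exL Ω.g (LX + LY) (ev2 Ω.o LX x y) z
            - exR Ω.phi LX x (ev2 Ω.g LY y z) - exR Ω.g LX x (ev2 Ω.o LY y z)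
          = exR Ω.psi (nXY dR) z (ev2 Ω.g LY y x) + exL Ω.g (LX + LY) (ev2 Ω.o LY y x) z
            - exR Ω.phi LY y (ev2 Ω.g LX x z) - exR Ω.g LY y (ev2 Ω.o LX x z)) ∧
      -- (LC10)
      (∀ x y z : Q,
        exL Ω.l (LX + LY) (ev2 Ω.g LX x y) z + exL Ω.o (LX + LY) (ev2 Ω.o LX x y) z
            - exL Ω.r (nX dQ) (ev2 Ω.g LY y z) x - exR Ω.o LX x (ev2 Ω.o LY y z)
          = exL Ω.l (LX + LY) (ev2 Ω.g LY y x) z + exL Ω.o (LX + LY) (ev2 Ω.o LY y x) z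
            - exL Ω.r (nY dQ) (ev2 Ω.g LX x z) y - exR Ω.o LY y (ev2 Ω.o LX x z))) := by
  have hdefect := (isLSCA_iff_forall_lsymDefect_eq_zero m hm.conf).mp hm
  rw [isLSCA_iff_forall_lsymDefect_eq_zero _ (uprod_confBilin dR dQ Ω m hm.conf),
    forall_lsymDefect_prod_eq_zero_iff]
  simp only [lsymDefect_uprod_rrr, hdefect, map_zero, implies_true, true_and,
    lsymDefect_uprod_qrr_eq_zero_iff Ω m hm.conf, lsymDefect_uprod_rrq_eq_zero_iff,
    lsymDefect_uprod_rqq_eq_zero_iff, lsymDefect_uprod_qqr_eq_zero_iff,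
    lsymDefect_uprod_qqq_eq_zero_iff, forall_and, and_assoc]
end
end

section
/- Let Ω(R,Q) = (φ, ψ, l, r, g_λ(·,·), ∘_λ) and Ω′(R,Q) = (φ′, ψ′, l′, r′, g′_λ(·,·), ∘′_λ) be two left-symmetric conformal extending structures of a left-symmetric conformal algebra R by a ℂ[∂]-module Q, with unified products R♮Q and R♮′Q. Then: (a) there exists an isomorphism of left-symmetric conformal algebras R♮Q → R♮′Q which stabilizes R if and only if there exist a ℂ[∂]-module homomorphism u : Q → R and a ℂ[∂]-module automorphism v of Q such that for all a ∈ R and x, y ∈ Q: (1) ψ(x)_{−λ−∂}a + u(l(a)_λ x) = a_λ u(x) + ψ′(v(x))_{−λ−∂}a; (2) v(l(a)_λ x) = l′(a)_λ v(x); (3) φ(x)_λ a + u(r(a)_{−λ−∂}x) = u(x)_λ a + φ′(v(x))_λ a; (4) v(r(a)_{−λ−∂}x) = r′(a)_{−λ−∂}v(x); (5) g_λ(x,y) + u(x∘_λ y) = u(x)_λ u(y) + φ′(v(x))_λ u(y) + ψ′(v(y))_{−λ−∂}u(x) + g′_λ(v(x),v(y)); (6) v(x∘_λ y) = r′(u(y))_{−λ−∂}v(x)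 + l′(u(x))_λ v(y) + v(x)∘′_λ v(y). (b) There exists such an isomorphism which moreover co-stabilizes Q if and only if conditions (1)–(6) hold with v = Id_Q. -/
open Finsupp Polynomial

noncomputable section

section Equivalences

variable {R Q : Type*} [AddCommGroup R] [Module ℂ R] [AddCommGroup Q] [Module ℂ Q]

/-- The compatibility conditions (3.9)–(3.14) of Definition 3.10, relating the extending
structures `Ω` and `Ω'` through the pair of ℂ[∂]-module maps `(u, v)`. -/
def DatumRel (dR : R →ₗ[ℂ] R) (dQ : Q →ₗ[ℂ] Q) (m : R →ₗ[ℂ] R →ₗ[ℂ] OP R)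
    (Ω Ω' : ExtDatum dR dQ) (u : Q →ₗ[ℂ] R) (v : Q →ₗ[ℂ] Q) : Prop :=
  (∀ (a : R) (x : Q), evA1 (nD dR) (Ω.psi x a) + pMap u (Ω.l a x)
      = m a (u x) + evA1 (nD dR) (Ω'.psi (v x) a)) ∧
  (∀ (a : R) (x : Q), pMap v (Ω.l a x) = Ω'.l a (v x)) ∧
  (∀ (a : R) (x : Q), Ω.phi x a + pMap u (evA1 (nD dQ) (Ω.r a x))
      = m (u x) a + Ω'.phi (v x) a) ∧
  (∀ (a : R) (x : Q), pMap v (evA1 (nD dQ) (Ω.r a x)) = evA1 (nD dQ) (Ω'.r a (v x))) ∧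
  (∀ x y : Q, Ω.g x y + pMap u (Ω.o x y)
      = m (u x) (u y) + Ω'.phi (v x) (u y) + evA1 (nD dR) (Ω'.psi (v y) (u x))
        + Ω'.g (v x) (v y)) ∧
  (∀ x y : Q, pMap v (Ω.o x y)
      = evA1 (nD dQ) (Ω'.r (u y) (v x)) + Ω'.l (u x) (v y) + Ω'.o (v x) (v y))

/-- `Ω ≡ Ω'` : the extending structures are equivalent. -/
def DatumEquiv (dR : R →ₗ[ℂ] R) (dQ : Q →ₗ[ℂ] Q) (m : R →ₗ[ℂ] R →ₗ[ℂ] OP R)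
    (Ω Ω' : ExtDatum dR dQ) : Prop :=
  ∃ (u : Q →ₗ[ℂ] R) (v : Q ≃ₗ[ℂ] Q),
    (∀ q, u (dQ q) = dR (u q)) ∧ (∀ q, v (dQ q) = dQ (v q)) ∧
    DatumRel dR dQ m Ω Ω' u (v : Q →ₗ[ℂ] Q)

/-- `Ω ≈ Ω'` : the extending structures are cohomologous (`v = Id`). -/
def DatumCohom (dR : R →ₗ[ℂ] R) (dQ : Q →ₗ[ℂ] Q) (m : R →ₗ[ℂ] R →ₗ[ℂ] OP R)
    (Ω Ω' : ExtDatum dR dQ) : Prop :=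
  ∃ u : Q →ₗ[ℂ] R,
    (∀ q, u (dQ q) = dR (u q)) ∧ DatumRel dR dQ m Ω Ω' u LinearMap.id

end Equivalences

section Aux

variable {R Q : Type*} [AddCommGroup R] [Module ℂ R] [AddCommGroup Q] [Module ℂ Q]

lemma pMap_apply {U W : Type*} [AddCommGroup U] [Module ℂ U] [AddCommGroup W] [Module ℂ W]
    (f : U →ₗ[ℂ] W) (p : OP U) (n : ℕ) : pMap f p n = f (p n) := by
  simp [pMap]

lemma inl_add_inr_apply (p : OP R) (s : OP Q) (n : ℕ) :
    (inlP R Q p + inrP R Q s) n = (p n, s n) := by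
  simp [inlP, inrP, Prod.ext_iff]


lemma inl_add_inr_eq_iff {p q : OP R} {s t : OP Q} :
    inlP R Q p + inrP R Q s = inlP R Q q + inrP R Q t ↔ p = q ∧ s = t := by
  constructor
  · intro h
    have key : ∀ n, p n = q n ∧ s n = t n := by
      intro n
      have h2 : (inlP R Q p + inrP R Q s) n = (inlP R Q q + inrP R Q t) n := by rw [h]
      rw [inl_add_inr_apply, inl_add_inr_apply, Prod.ext_iff] at h2
      exact h2
    exact ⟨Finsupp.ext fun n => (key n).1, Finsupp.ext fun n => (key n).2⟩
  · rintro ⟨rfl, rfl⟩; rfl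

lemma pMap_T (u : Q →ₗ[ℂ] R) (v : Q →ₗ[ℂ] Q) (T : (R × Q) →ₗ[ℂ] (R × Q))
    (hT : ∀ e : R × Q, T e = (e.1 + u e.2, v e.2)) (p : OP R) (s : OP Q) :
    pMap T (inlP R Q p + inrP R Q s)
      = inlP R Q (p + pMap u s) + inrP R Q (pMap v s) := by
  ext n : 1
  rw [pMap_apply, inl_add_inr_apply, inl_add_inr_apply, hT]
  simp [pMap_apply, Prod.ext_iff]

lemma mult_iff (dR : R →ₗ[ℂ] R) (dQ : Q →ₗ[ℂ] Q) (m : R →ₗ[ℂ] R →ₗ[ℂ] OP R)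
    (Ω Ω' : ExtDatum dR dQ) (u : Q →ₗ[ℂ] R) (v : Q →ₗ[ℂ] Q)
    (T : (R × Q) →ₗ[ℂ] (R × Q)) (hT : ∀ e : R × Q, T e = (e.1 + u e.2, v e.2)) :
    (∀ e₁ e₂, uprod dR dQ Ω' m (T e₁) (T e₂) = pMap T (uprod dR dQ Ω m e₁ e₂))
      ↔ DatumRel dR dQ m Ω Ω' u v := by
  have hT2 : ∀ (a : R) (x : Q), T (a, x) = (a + u x, v x) := fun a x => hT (a, x)
  constructor
  · intro H
    refine ⟨fun a x => ?_, fun a x => ?_, fun a x => ?_, fun a x => ?_,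
      fun x y => ?_, fun x y => ?_⟩
    · have h := H (a, 0) (0, x)
      rw [hT2, hT2, uprod_apply, uprod_apply, pMap_T u v T hT, inl_add_inr_eq_iff] at h
      obtain ⟨h1, -⟩ := h
      simp only [map_zero, add_zero, zero_add, LinearMap.zero_apply, LinearMap.map_zero] at h1
      linear_combination (norm := abel) h1.symm
    · have h := H (a, 0) (0, x)
      rw [hT2, hT2, uprod_apply, uprod_apply, pMap_T u v T hT, inl_add_inr_eq_iff] at h
      obtain ⟨-, h2⟩ := h
      simp only [map_zero, add_zero, zero_add, LinearMap.zero_apply, LinearMap.map_zero] at h2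
      linear_combination (norm := abel) h2.symm
    · have h := H (0, x) (a, 0)
      rw [hT2, hT2, uprod_apply, uprod_apply, pMap_T u v T hT, inl_add_inr_eq_iff] at h
      obtain ⟨h1, -⟩ := h
      simp only [map_zero, add_zero, zero_add, LinearMap.zero_apply, LinearMap.map_zero] at h1
      linear_combination (norm := abel) h1.symm
    · have h := H (0, x) (a, 0)
      rw [hT2, hT2, uprod_apply, uprod_apply, pMap_T u v T hT, inl_add_inr_eq_iff] at h
      obtain ⟨-, h2⟩ := h
      simp only [map_zero, add_zero, zero_add, LinearMap.zero_apply, LinearMap.map_zero] at h2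
      linear_combination (norm := abel) h2.symm
    · have h := H (0, x) (0, y)
      rw [hT2, hT2, uprod_apply, uprod_apply, pMap_T u v T hT, inl_add_inr_eq_iff] at h
      obtain ⟨h1, -⟩ := h
      simp only [map_zero, add_zero, zero_add, LinearMap.zero_apply, LinearMap.map_zero] at h1
      linear_combination (norm := abel) h1.symm
    · have h := H (0, x) (0, y)
      rw [hT2, hT2, uprod_apply, uprod_apply, pMap_T u v T hT, inl_add_inr_eq_iff] at h
      obtain ⟨-, h2⟩ := h
      simp only [map_zero, add_zero, zero_add, LinearMap.zero_apply, LinearMap.map_zero] at h2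
      linear_combination (norm := abel) h2.symm
  · rintro ⟨h1, h2, h3, h4, h5, h6⟩ ⟨a, x⟩ ⟨b, y⟩
    rw [hT2, hT2, uprod_apply, uprod_apply, pMap_T u v T hT, inl_add_inr_eq_iff]
    simp only [map_add, LinearMap.add_apply]
    constructor
    · linear_combination (norm := abel) -(h1 a y) - (h3 b x) - (h5 x y)
    · linear_combination (norm := abel) -(h2 a y) - (h4 b x) - (h6 x y)
lemma extract_uv (dR : R →ₗ[ℂ] R) (dQ : Q →ₗ[ℂ] Q) (m : R →ₗ[ℂ] R →ₗ[ℂ] OP R)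
    (Ω Ω' : ExtDatum dR dQ) (T : (R × Q) ≃ₗ[ℂ] (R × Q))
    (hIso : IsIsoLSCA (dR.prodMap dQ) (uprod dR dQ Ω m) (uprod dR dQ Ω' m) T)
    (hStab : Stab T) :
    ∃ (u : Q →ₗ[ℂ] R) (v : Q ≃ₗ[ℂ] Q),
      (∀ e : R × Q, T e = (e.1 + u e.2, (v : Q →ₗ[ℂ] Q) e.2)) ∧
      (∀ q, u (dQ q) = dR (u q)) ∧ (∀ q, v (dQ q) = dQ (v q)) ∧
      DatumRel dR dQ m Ω Ω' u (v : Q →ₗ[ℂ] Q) := by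
  set u : Q →ₗ[ℂ] R :=
    LinearMap.fst ℂ R Q ∘ₗ (T : (R × Q) →ₗ[ℂ] (R × Q)) ∘ₗ LinearMap.inr ℂ R Q with hu
  set v₀ : Q →ₗ[ℂ] Q :=
    LinearMap.snd ℂ R Q ∘ₗ (T : (R × Q) →ₗ[ℂ] (R × Q)) ∘ₗ LinearMap.inr ℂ R Q with hv
  set v₁ : Q →ₗ[ℂ] Q :=
    LinearMap.snd ℂ R Q ∘ₗ (T.symm : (R × Q) →ₗ[ℂ] (R × Q)) ∘ₗ LinearMap.inr ℂ R Q with hv1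
  have hu_app : ∀ x, u x = (T (0, x)).1 := fun x => rfl
  have hv_app : ∀ x, v₀ x = (T (0, x)).2 := fun x => rfl
  have hv1_app : ∀ x, v₁ x = (T.symm (0, x)).2 := fun x => rfl
  have hT' : ∀ e : R × Q, T e = (e.1 + u e.2, v₀ e.2) := by
    rintro ⟨a, x⟩
    have h0 : ((a, x) : R × Q) = (a, 0) + (0, x) := by simp
    calc T (a, x) = T (a, 0) + T (0, x) := by rw [← map_add]; exact congrArg T h0
    _ = ((a, x).1 + u (a, x).2, v₀ (a, x).2) := by
        rw [hStab a]; simp [Prod.ext_iff, hu_app, hv_app]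
  have hStab' : ∀ a : R, T.symm (a, 0) = (a, 0) := fun a =>
    (LinearEquiv.symm_apply_eq T).2 (hStab a).symm
  have hinv₁ : ∀ x, v₁ (v₀ x) = x := by
    intro x
    have h1 : ((0 : R), v₀ x) = T (0, x) - (u x, 0) := by
      rw [hT' (0, x)]; simp
    rw [hv1_app, h1, map_sub, LinearEquiv.symm_apply_apply, hStab']
    simp
  have hinv₂ : ∀ x, v₀ (v₁ x) = x := by
    intro x
    have h1 : ((0 : R), v₁ x) = T.symm (0, x) - ((T.symm (0, x)).1, 0) := by
      rw [hv1_app]; simp [Prod.ext_iff]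
    rw [hv_app, h1, map_sub, LinearEquiv.apply_symm_apply, hStab (T.symm (0, x)).1]
    simp
  have hd : ∀ q : Q, u (dQ q) = dR (u q) ∧ v₀ (dQ q) = dQ (v₀ q) := by
    intro q
    have h := hIso.dcomm (0, q)
    rw [show (dR.prodMap dQ) ((0 : R), q) = (0, dQ q) by simp] at h
    rw [hT' (0, dQ q), hT' (0, q)] at h
    simpa [Prod.ext_iff] using h
  have hrel : DatumRel dR dQ m Ω Ω' u v₀ :=
    (mult_iff dR dQ m Ω Ω' u v₀ (T : (R × Q) →ₗ[ℂ] (R × Q)) hT').1 hIso.mult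
  refine ⟨u, LinearEquiv.ofLinear v₀ v₁ (LinearMap.ext hinv₂) (LinearMap.ext hinv₁),
    hT', fun q => (hd q).1, fun q => (hd q).2, hrel⟩

lemma build_T (dR : R →ₗ[ℂ] R) (dQ : Q →ₗ[ℂ] Q) (m : R →ₗ[ℂ] R →ₗ[ℂ] OP R)
    (Ω Ω' : ExtDatum dR dQ) (u : Q →ₗ[ℂ] R) (v : Q ≃ₗ[ℂ] Q)
    (hud : ∀ q, u (dQ q) = dR (u q)) (hvd : ∀ q, v (dQ q) = dQ (v q))
    (hrel : DatumRel dR dQ m Ω Ω' u (v : Q →ₗ[ℂ] Q)) :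
    ∃ T : (R × Q) ≃ₗ[ℂ] (R × Q),
      IsIsoLSCA (dR.prodMap dQ) (uprod dR dQ Ω m) (uprod dR dQ Ω' m) T ∧ Stab T ∧
      (∀ e : R × Q, (T e).2 = (v : Q →ₗ[ℂ] Q) e.2) := by
  set Tl : (R × Q) →ₗ[ℂ] (R × Q) :=
    (LinearMap.fst ℂ R Q + u ∘ₗ LinearMap.snd ℂ R Q).prod
      ((v : Q →ₗ[ℂ] Q) ∘ₗ LinearMap.snd ℂ R Q) with hTl
  set Sl : (R × Q) →ₗ[ℂ] (R × Q) :=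
    (LinearMap.fst ℂ R Q - u ∘ₗ (v.symm : Q →ₗ[ℂ] Q) ∘ₗ LinearMap.snd ℂ R Q).prod
      ((v.symm : Q →ₗ[ℂ] Q) ∘ₗ LinearMap.snd ℂ R Q) with hSl
  have hTl_app : ∀ e : R × Q, Tl e = (e.1 + u e.2, v e.2) := fun e => rfl
  have hSl_app : ∀ e : R × Q, Sl e = (e.1 - u (v.symm e.2), v.symm e.2) := fun e => rfl
  have hTS : Tl ∘ₗ Sl = LinearMap.id := by
    apply LinearMap.ext
    rintro ⟨a, x⟩
    rw [LinearMap.comp_apply, hSl_app, hTl_app]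
    simp [Prod.ext_iff]
  have hST : Sl ∘ₗ Tl = LinearMap.id := by
    apply LinearMap.ext
    rintro ⟨a, x⟩
    rw [LinearMap.comp_apply, hTl_app, hSl_app]
    simp [Prod.ext_iff]
  refine ⟨LinearEquiv.ofLinear Tl Sl hTS hST, ⟨?_, ?_⟩, ?_, ?_⟩
  · rintro ⟨a, x⟩
    show Tl ((dR.prodMap dQ) (a, x)) = (dR.prodMap dQ) (Tl (a, x))
    rw [show (dR.prodMap dQ) (a, x) = (dR a, dQ x) by simp, hTl_app, hTl_app]
    simp [Prod.ext_iff, map_add, hud x, hvd x]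
  · exact (mult_iff dR dQ m Ω Ω' u (v : Q →ₗ[ℂ] Q) Tl hTl_app).2 hrel
  · intro a
    show Tl (a, 0) = (a, 0)
    rw [hTl_app]
    simp
  · intro e
    rfl
end Aux
/-- **Lemma 3.11.**  Let `Ω` and `Ω'` be two left-symmetric conformal extending structures
of `R` by `Q`.  (a) There is an isomorphism `R ♮ Q → R ♮' Q` of left-symmetric conformal
algebras stabilizing `R` iff `Ω ≡ Ω'` (conditions (1)–(6) hold for some `(u, v)` with `v` an
automorphism).  (b) There is such an isomorphism which moreover co-stabilizes `Q` iff the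
conditions hold with `v = Id`. -/
theorem unified_products_iso_iff
    {R Q : Type*} [AddCommGroup R] [Module ℂ R] [AddCommGroup Q] [Module ℂ Q]
    (dR : R →ₗ[ℂ] R) (dQ : Q →ₗ[ℂ] Q)
    (m : R →ₗ[ℂ] R →ₗ[ℂ] OP R) (hm : IsLSCA dR m)
    (Ω Ω' : ExtDatum dR dQ)
    (hΩ : IsLSCA (dR.prodMap dQ) (uprod dR dQ Ω m))
    (hΩ' : IsLSCA (dR.prodMap dQ) (uprod dR dQ Ω' m)) :
    ((∃ T : (R × Q) ≃ₗ[ℂ] (R × Q),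
        IsIsoLSCA (dR.prodMap dQ) (uprod dR dQ Ω m) (uprod dR dQ Ω' m) T ∧ Stab T)
      ↔ DatumEquiv dR dQ m Ω Ω') ∧
    ((∃ T : (R × Q) ≃ₗ[ℂ] (R × Q),
        IsIsoLSCA (dR.prodMap dQ) (uprod dR dQ Ω m) (uprod dR dQ Ω' m) T ∧ Stab T ∧ Costab T)
      ↔ DatumCohom dR dQ m Ω Ω') := by
  constructor
  · constructor
    · rintro ⟨T, hIso, hStab⟩
      obtain ⟨u, v, hT', hud, hvd, hrel⟩ := extract_uv dR dQ m Ω Ω' T hIso hStab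
      exact ⟨u, v, hud, hvd, hrel⟩
    · rintro ⟨u, v, hud, hvd, hrel⟩
      obtain ⟨T, hIso, hStab, -⟩ := build_T dR dQ m Ω Ω' u v hud hvd hrel
      exact ⟨T, hIso, hStab⟩
  · constructor
    · rintro ⟨T, hIso, hStab, hCo⟩
      obtain ⟨u, v, hT', hud, hvd, hrel⟩ := extract_uv dR dQ m Ω Ω' T hIso hStab
      have hvid : (v : Q →ₗ[ℂ] Q) = LinearMap.id := by
        apply LinearMap.ext
        intro x
        have h := hCo (0, x)
        rw [hT' (0, x)] at h
        simpa using h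
      rw [hvid] at hrel
      exact ⟨u, hud, hrel⟩
    · rintro ⟨u, hud, hrel⟩
      obtain ⟨T, hIso, hStab, hCo⟩ :=
        build_T dR dQ m Ω Ω' u (LinearEquiv.refl ℂ Q) hud (fun q => rfl) hrel
      exact ⟨T, hIso, hStab, fun e => hCo e⟩
end
end
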